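/- Let k and d be positive integers such that kd + 1 is a prime power, let F be a finite field with |F| = kd + 1, and let y be an element of multiplicative order d in Fˣ. Then the function f : ℤ/dℤ → F defined by f(j) = y^{j̄}, where j̄ ∈ {0,…,d−1} is the canonical representative of j (well defined since y has order d), is differentially 1-uniform from the additive group ℤ/dℤ to the additive group of F. -/
import Mathlib


/-- A function `f : G → H` between additive groups is differentially 1-uniform if for
every `(a, b) ≠ (0, 0)` the equation `f (x + a) - f x = b` has at most one solution. -/
def DiffOneUniform {G H : Type*} [AddGroup G] [AddGroup H] (f : G → H) : Prop :=
  ∀ a : G, ∀ b : H, ¬(a = 0 ∧ b = 0) →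
    ∀ x y : G, f (x + a) - f x = b → f (y + a) - f y = b → x = y

/-- If `kd + 1` is a prime power, `F` is a field of order `kd + 1` and `y ∈ Fˣ` has
multiplicative order `d`, then `j ↦ y^j` is a differentially 1-uniform function from
`ℤ/dℤ` to `(F, +)`. -/
theorem diffOneUniform_powers_of_order_d (k d : ℕ) (hk : 0 < k) (hd : 0 < d)
    (F : Type*) [Field F] [Fintype F] (hF : Fintype.card F = k * d + 1)
    (y : Fˣ) (hy : orderOf y = d) :
    DiffOneUniform (fun j : ZMod d => ((y : F) ^ (j.val) : F)) := by
  haveI : NeZero d := ⟨hd.ne'⟩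
  have hyF : orderOf (y : F) = d := by rw [orderOf_units, hy]
  have key : ∀ u v : ZMod d, (y : F) ^ (u + v).val = (y : F) ^ u.val * (y : F) ^ v.val := by
    intro u v
    have h := pow_mod_orderOf (y : F) (u.val + v.val)
    rw [hyF] at h
    rw [ZMod.val_add, h, pow_add]
  intro a b hab x z hx hz
  simp only [key] at hx hz
  by_cases ha : a = 0
  · subst ha
    simp only [ZMod.val_zero, pow_zero, mul_one, sub_self] at hx
    exact absurd ⟨rfl, hx.symm⟩ hab
  · have hav : a.val ≠ 0 := fun h => ha (by rwa [ZMod.val_eq_zero] at h)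
    have h1 : (y : F) ^ a.val ≠ 1 := by
      intro h
      have hdvd := orderOf_dvd_of_pow_eq_one h
      rw [hyF] at hdvd
      exact absurd (Nat.le_of_dvd (Nat.pos_of_ne_zero hav) hdvd) (not_le.mpr (ZMod.val_lt a))
    have hc : (y : F) ^ a.val - 1 ≠ 0 := sub_ne_zero.mpr h1
    have hx' : (y : F) ^ x.val * ((y : F) ^ a.val - 1) = b := by ring_nf; ring_nf at hx; linear_combination hx
    have hz' : (y : F) ^ z.val * ((y : F) ^ a.val - 1) = b := by ring_nf; ring_nf at hz; linear_combination hz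
    have heq : (y : F) ^ x.val = (y : F) ^ z.val :=
      mul_right_cancel₀ hc (hx'.trans hz'.symm)
    have hmod : x.val ≡ z.val [MOD d] := by
      have hu : y ^ x.val = y ^ z.val := by
        apply Units.ext
        simpa [Units.val_pow_eq_pow_val] using heq
      have h := pow_eq_pow_iff_modEq.mp hu
      rwa [hy] at h
    have : x.val = z.val := by
      have := hmod
      rwa [Nat.ModEq, Nat.mod_eq_of_lt (ZMod.val_lt x), Nat.mod_eq_of_lt (ZMod.val_lt z)] at this
    exact ZMod.val_injective d this
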